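/- Let V ⊆ (ℤ/2)^{2n} be a subgroup generated by 2c symplectic-pair generators g₁,h₁,…,g_c,h_c and r isotropic generators, all independent and satisfying the standard commutation relations, where g₁ and h₁ both have odd weight and all other generators have even weight. Then the number of even-weight elements of V equals 2^{r-1}(4^c - 2^c) and the number of odd-weight elements equals 2^{r-1}(4^c + 2^c). -/

import Mathlib

open Finset

/-- An `n`-qubit Pauli operator modulo phase, identified with `(u, v) ∈ (ℤ/2)ⁿ × (ℤ/2)ⁿ`
(corresponding to `Z^u X^v`). -/
abbrev Pauli (n : ℕ) := (Fin n → ZMod 2) × (Fin n → ZMod 2)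

/-- The weight of a Pauli operator: the number of qubits on which it acts nontrivially. -/
def wtP {n : ℕ} (g : Pauli n) : ℕ :=
  (Finset.univ.filter fun i => g.1 i ≠ 0 ∨ g.2 i ≠ 0).card

/-- The symplectic inner product of two Pauli operators. -/
def sip {n : ℕ} (g h : Pauli n) : ZMod 2 :=
  ∑ i, (g.1 i * h.2 i + g.2 i * h.1 i)

/-!
Write `x ∈ V` as `∑ aᵢ gᵢ + ∑ bⱼ hⱼ`; the cardinality hypothesis makes these coordinates unique.
Since `wt (x + y) ≡ wt x + wt y + ⟨x, y⟩`, the weight parity of `x` is the quadratic form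
`Q (a, b) = a₀ + b₀ + ∑_{j < c} aⱼ bⱼ`. Translating `(a, b)` by the coordinates of `g₀ + h₀` turns
`Q` into `1 + H` with `H` the hyperbolic form `∑_{j < c} aⱼ bⱼ`, whose character sum
`∑ (-1) ^ H = 2 ^ (c + r)` factors over the `c` hyperbolic planes and the `r` radical coordinates.
So `#odd - #even = 2 ^ (c + r)`, while `#odd + #even = 2 ^ (2c + r)`.
-/

def zmodTwoSign (x : ZMod 2) : ℤ := if x = 0 then 1 else -1

theorem zmodTwoSign_add (x y : ZMod 2) : zmodTwoSign (x + y) = zmodTwoSign x * zmodTwoSign y := by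
  revert x y; decide

theorem zmodTwoSign_sum {ι : Type*} (s : Finset ι) (f : ι → ZMod 2) :
    zmodTwoSign (∑ i ∈ s, f i) = ∏ i ∈ s, zmodTwoSign (f i) := by
  induction s using Finset.cons_induction with
  | empty => rfl
  | cons a s _ ih => rw [sum_cons, prod_cons, zmodTwoSign_add, ih]

theorem card_filter_eq_zero_sub_card_filter_ne_zero {α : Type*} [Fintype α] (f : α → ZMod 2) :
    (#{a | f a = 0} : ℤ) - #{a | f a ≠ 0} = ∑ a, zmodTwoSign (f a) := by
  simp [zmodTwoSign, sum_ite, sub_eq_add_neg]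

theorem sum_zmodTwoSign_mul (z : ZMod 2) : ∑ y, zmodTwoSign (z * y) = 1 + zmodTwoSign z := by
  revert z; decide

section QuadraticForms

variable {c r : ℕ}

/-- `p = (a, b)` stands for `∑ aᵢ gᵢ + ∑ bⱼ hⱼ`, the last `r` of the `gᵢ` being isotropic
generators without partner. -/
def hyperbolicForm (p : (Fin (c + r) → ZMod 2) × (Fin c → ZMod 2)) : ZMod 2 :=
  ∑ j, p.1 (Fin.castAdd r j) * p.2 j

theorem sum_zmodTwoSign_hyperbolicForm :
    ∑ p : (Fin (c + r) → ZMod 2) × (Fin c → ZMod 2), zmodTwoSign (hyperbolicForm p)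
      = 2 ^ (c + r) := by
  let K : Fin (c + r) → ZMod 2 → ℤ := Fin.addCases (fun _ y => 1 + zmodTwoSign y) (fun _ _ => 1)
  have hK : ∀ i, ∑ y, K i y = 2 := Fin.addCases (fun _ => by simp [K]; decide) (fun _ => by simp [K])
  calc ∑ p : (Fin (c + r) → ZMod 2) × (Fin c → ZMod 2), zmodTwoSign (hyperbolicForm p)
      = ∑ a : Fin (c + r) → ZMod 2, ∏ j, ∑ y, zmodTwoSign (a (Fin.castAdd r j) * y) := by
        simp_rw [Fintype.sum_prod_type, hyperbolicForm, zmodTwoSign_sum, Fintype.prod_sum]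
    _ = ∑ a : Fin (c + r) → ZMod 2, ∏ i, K i (a i) := by
        refine sum_congr rfl fun a _ => ?_
        simp [K, Fin.prod_univ_add, sum_zmodTwoSign_mul]
    _ = 2 ^ (c + r) := by simp [← Fintype.prod_sum, hK]

def typeIIIForm (j₀ : Fin c) (p : (Fin (c + r) → ZMod 2) × (Fin c → ZMod 2)) : ZMod 2 :=
  p.1 (Fin.castAdd r j₀) + p.2 j₀ + hyperbolicForm p

theorem typeIIIForm_eq_hyperbolicForm_add (j₀ : Fin c)
    (p : (Fin (c + r) → ZMod 2) × (Fin c → ZMod 2)) :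
    typeIIIForm j₀ p
      = hyperbolicForm (p + (Pi.single (Fin.castAdd r j₀) 1, Pi.single j₀ 1)) + 1 := by
  simp only [typeIIIForm, hyperbolicForm, Prod.fst_add, Prod.snd_add, Pi.add_apply, add_mul,
    mul_add, sum_add_distrib, Pi.single_apply, (Fin.castAdd_injective c r).eq_iff, ite_mul,
    mul_ite, one_mul, mul_one, zero_mul, mul_zero, sum_ite_eq', mem_univ, ↓reduceIte]
  ring_nf
  reduce_mod_char

theorem sum_zmodTwoSign_typeIIIForm (j₀ : Fin c) :
    ∑ p : (Fin (c + r) → ZMod 2) × (Fin c → ZMod 2), zmodTwoSign (typeIIIForm j₀ p)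
      = -2 ^ (c + r) := by
  simp_rw [typeIIIForm_eq_hyperbolicForm_add, zmodTwoSign_add]
  rw [← sum_mul, show zmodTwoSign 1 = -1 from rfl, mul_neg_one, neg_inj,
    ← sum_zmodTwoSign_hyperbolicForm]
  exact Fintype.sum_equiv (Equiv.addRight (Pi.single (Fin.castAdd r j₀) 1, Pi.single j₀ 1)) _ _
    fun _ => rfl

theorem two_mul_card_typeIIIForm (j₀ : Fin c) :
    2 * #{p | typeIIIForm (r := r) j₀ p = 0} = 2 ^ r * (4 ^ c - 2 ^ c) ∧
    2 * #{p | typeIIIForm (r := r) j₀ p ≠ 0} = 2 ^ r * (4 ^ c + 2 ^ c) := by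
  have hdiff : (#{p | typeIIIForm (r := r) j₀ p = 0} : ℤ) - #{p | typeIIIForm (r := r) j₀ p ≠ 0}
      = -((2 ^ r * 2 ^ c : ℕ) : ℤ) := by
    rw [card_filter_eq_zero_sub_card_filter_ne_zero, sum_zmodTwoSign_typeIIIForm]
    push_cast; ring
  have htotal : #{p | typeIIIForm (r := r) j₀ p = 0} + #{p | typeIIIForm (r := r) j₀ p ≠ 0}
      = 2 ^ r * 4 ^ c := by
    rw [card_filter_add_card_filter_not, card_univ]
    simp only [Fintype.card_prod, Fintype.card_pi, ZMod.card, prod_const, card_univ,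
      Fintype.card_fin]
    rw [show (4 : ℕ) = 2 * 2 from rfl, mul_pow, pow_add]
    ring
  rw [Nat.mul_sub, mul_add]
  omega

end QuadraticForms

section Pauli

variable {n : ℕ}

theorem sip_add_left (x y z : Pauli n) : sip (x + y) z = sip x z + sip y z := by
  simp only [sip, Prod.fst_add, Prod.snd_add, Pi.add_apply, ← sum_add_distrib]
  exact sum_congr rfl fun _ _ => by ring

theorem sip_add_right (x y z : Pauli n) : sip x (y + z) = sip x y + sip x z := by
  simp only [sip, Prod.fst_add, Prod.snd_add, Pi.add_apply, ← sum_add_distrib]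
  exact sum_congr rfl fun _ _ => by ring

theorem sip_smul_left (a : ZMod 2) (x y : Pauli n) : sip (a • x) y = a * sip x y := by
  simp only [sip, Prod.smul_fst, Prod.smul_snd, Pi.smul_apply, smul_eq_mul, mul_sum]
  exact sum_congr rfl fun _ _ => by ring

theorem sip_smul_right (a : ZMod 2) (x y : Pauli n) : sip x (a • y) = a * sip x y := by
  simp only [sip, Prod.smul_fst, Prod.smul_snd, Pi.smul_apply, smul_eq_mul, mul_sum]
  exact sum_congr rfl fun _ _ => by ring

variable (n) in
def sipForm : LinearMap.BilinForm (ZMod 2) (Pauli n) :=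
  LinearMap.mk₂ (ZMod 2) sip sip_add_left sip_smul_left sip_add_right sip_smul_right

theorem sip_sum_smul_sum_smul {ι κ : Type*} [Fintype ι] [Fintype κ]
    (a : ι → ZMod 2) (b : κ → ZMod 2) (g : ι → Pauli n) (h : κ → Pauli n) :
    sip (∑ i, a i • g i) (∑ j, b j • h j) = ∑ i, ∑ j, a i * b j * sip (g i) (h j) := by
  change sipForm n _ _ = _
  simp only [sipForm, map_sum, map_smul, LinearMap.sum_apply, LinearMap.smul_apply,
    LinearMap.mk₂_apply, smul_eq_mul, mul_sum, mul_assoc]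
  rw [sum_comm]
  exact sum_congr rfl fun _ _ => sum_congr rfl fun _ _ => mul_left_comm _ _ _

theorem cast_wtP (x : Pauli n) :
    (wtP x : ZMod 2) = ∑ i, if x.1 i ≠ 0 ∨ x.2 i ≠ 0 then 1 else 0 := by
  rw [wtP, card_filter]
  push_cast
  rfl

theorem cast_wtP_add (x y : Pauli n) :
    (wtP (x + y) : ZMod 2) = wtP x + wtP y + sip x y := by
  simp only [cast_wtP, sip, ← sum_add_distrib, Prod.fst_add, Prod.snd_add, Pi.add_apply]
  refine sum_congr rfl fun i _ => ?_
  have key : ∀ a b u v : ZMod 2, (if a + u ≠ 0 ∨ b + v ≠ 0 then (1 : ZMod 2) else 0)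
      = (if a ≠ 0 ∨ b ≠ 0 then 1 else 0) + (if u ≠ 0 ∨ v ≠ 0 then 1 else 0) + (a * v + b * u) := by
    decide
  exact key _ _ _ _

theorem cast_wtP_smul (a : ZMod 2) (x : Pauli n) : (wtP (a • x) : ZMod 2) = a * wtP x := by
  obtain rfl | rfl : a = 0 ∨ a = 1 := by revert a; decide
  · simp [wtP]
  · simp

theorem cast_wtP_sum_of_sip_eq_zero {ι : Type*} (s : Finset ι) (v : ι → Pauli n)
    (hv : ∀ i ∈ s, ∀ j ∈ s, sip (v i) (v j) = 0) :
    (wtP (∑ i ∈ s, v i) : ZMod 2) = ∑ i ∈ s, (wtP (v i) : ZMod 2) := by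
  induction s using Finset.cons_induction with
  | empty => simp [wtP]
  | cons a s _ ih =>
    have hcomm : sip (v a) (∑ i ∈ s, v i) = 0 := by
      rw [show sip (v a) _ = sipForm n (v a) _ from rfl, map_sum]
      exact sum_eq_zero fun i hi => hv a (mem_cons_self a s) i (mem_cons_of_mem hi)
    rw [sum_cons, sum_cons, cast_wtP_add, hcomm, add_zero,
      ih fun i hi j hj => hv i (mem_cons_of_mem hi) j (mem_cons_of_mem hj)]

end Pauli

section PairLinearCombination

variable (R : Type*) {M ι κ : Type*} [CommSemiring R] [AddCommMonoid M] [Module R M]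
  [Fintype ι] [Fintype κ]

def pairLinearCombination (g : ι → M) (h : κ → M) : (ι → R) × (κ → R) →ₗ[R] M :=
  (Fintype.linearCombination R g).coprod (Fintype.linearCombination R h)

theorem pairLinearCombination_apply (g : ι → M) (h : κ → M) (p : (ι → R) × (κ → R)) :
    pairLinearCombination R g h p = ∑ i, p.1 i • g i + ∑ j, p.2 j • h j := rfl

theorem range_pairLinearCombination (g : ι → M) (h : κ → M) :
    LinearMap.range (pairLinearCombination R g h) = Submodule.span R (Set.range g ∪ Set.range h) := by
  rw [pairLinearCombination, LinearMap.range_coprod, Fintype.range_linearCombination,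
    Fintype.range_linearCombination, Submodule.span_union]

end PairLinearCombination

section ZModClosure

variable {m : ℕ} {M ι κ : Type*} [AddCommGroup M] [Module (ZMod m) M] [Fintype ι] [Fintype κ]

theorem Submodule.span_zmod_toAddSubgroup (s : Set M) :
    (span (ZMod m) s).toAddSubgroup = AddSubgroup.closure s :=
  le_antisymm (span_le (p := AddSubgroup.toZModSubmodule m (AddSubgroup.closure s)).mpr
    AddSubgroup.subset_closure) ((AddSubgroup.closure_le _).mpr subset_span)

theorem closure_range_union_eq_range_pairLinearCombination (g : ι → M) (h : κ → M) :
    AddSubgroup.closure (Set.range g ∪ Set.range h)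
      = (LinearMap.range (pairLinearCombination (ZMod m) g h)).toAddSubgroup := by
  rw [range_pairLinearCombination, Submodule.span_zmod_toAddSubgroup]

theorem injective_pairLinearCombination_of_card_closure [NeZero m] (g : ι → M) (h : κ → M)
    (hcard : Nat.card (AddSubgroup.closure (Set.range g ∪ Set.range h))
      = Nat.card ((ι → ZMod m) × (κ → ZMod m))) :
    Function.Injective (pairLinearCombination (ZMod m) g h) := by
  refine Set.rangeFactorization_injective.mp
    (Set.rangeFactorization_surjective.bijective_of_nat_card_le ?_).1
  rw [← LinearMap.coe_range, SetLike.coe_sort_coe, ← hcard,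
    closure_range_union_eq_range_pairLinearCombination (m := m) g h]
  rfl

end ZModClosure

theorem cast_wtP_pairLinearCombination {n c r : ℕ} (g : Fin (c + r) → Pauli n)
    (h : Fin c → Pauli n) (hgg : ∀ i j, sip (g i) (g j) = 0) (hhh : ∀ i j, sip (h i) (h j) = 0)
    (hgh : ∀ i j, sip (g i) (h j) = if i = Fin.castAdd r j then 1 else 0)
    (p : (Fin (c + r) → ZMod 2) × (Fin c → ZMod 2)) :
    (wtP (pairLinearCombination (ZMod 2) g h p) : ZMod 2)
      = ∑ i, p.1 i * wtP (g i) + ∑ j, p.2 j * wtP (h j) + hyperbolicForm p := by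
  rw [pairLinearCombination_apply, cast_wtP_add,
    cast_wtP_sum_of_sip_eq_zero _ _ fun i _ j _ => by simp [sip_smul_left, sip_smul_right, hgg],
    cast_wtP_sum_of_sip_eq_zero _ _ fun i _ j _ => by simp [sip_smul_left, sip_smul_right, hhh],
    sip_sum_smul_sum_smul]
  simp [cast_wtP_smul, hgh, hyperbolicForm, sum_comm (γ := Fin (c + r))]

theorem Set.ncard_setOf_mem_range_and {α β : Type*} [Fintype α] {f : α → β}
    (hf : f.Injective) (P : β → Prop) [DecidablePred P] :
    {x | x ∈ Set.range f ∧ P x}.ncard = #{a | P (f a)} := by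
  rw [Set.ofPred_and, Set.ofPred_mem_eq, ← Set.image_preimage_eq_range_inter,
    Set.ncard_image_of_injective _ hf, ← Set.ncard_coe_finset, coe_filter_univ]
  rfl

theorem sum_mul_natCast_eq_of_odd_unique {ι : Type*} [Fintype ι] (a : ι → ZMod 2) (f : ι → ℕ)
    (i₀ : ι) (hodd : ¬ Even (f i₀)) (heven : ∀ i ≠ i₀, Even (f i)) :
    ∑ i, a i * (f i : ZMod 2) = a i₀ := by
  rw [sum_eq_single i₀ (fun i _ hi => by rw [(ZMod.natCast_eq_zero_iff_even).mpr (heven i hi),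
    mul_zero]) (by simp), ZMod.natCast_eq_one_iff_odd.mpr (Nat.not_even_iff_odd.mp hodd), mul_one]

/-- Type III: one symplectic pair `g₁, h₁` both of odd weight, all other generators even.
The conclusions are stated multiplied by 2, so that `2^{r-1}(4^c ∓ 2^c)` makes sense
also for `r = 0`. -/
theorem typeIII_weight_count {n c r : ℕ} (hc : 1 ≤ c)
    (g : Fin (c + r) → Pauli n) (h : Fin c → Pauli n)
    (hgg : ∀ i j, sip (g i) (g j) = 0)
    (hhh : ∀ i j, sip (h i) (h j) = 0)
    (hgh : ∀ (i : Fin (c + r)) (j : Fin c), sip (g i) (h j) = if (i : ℕ) = (j : ℕ) then 1 else 0)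
    (hcard : Nat.card (AddSubgroup.closure (Set.range g ∪ Set.range h) : AddSubgroup (Pauli n))
      = 2 ^ (2 * c + r))
    (hg1 : ¬ Even (wtP (g ⟨0, by omega⟩)))
    (hh1 : ¬ Even (wtP (h ⟨0, hc⟩)))
    (hgeven : ∀ i : Fin (c + r), (i : ℕ) ≠ 0 → Even (wtP (g i)))
    (hheven : ∀ j : Fin c, (j : ℕ) ≠ 0 → Even (wtP (h j))) :
    2 * {x | x ∈ AddSubgroup.closure (Set.range g ∪ Set.range h) ∧ Even (wtP x)}.ncard
        = 2 ^ r * (4 ^ c - 2 ^ c) ∧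
    2 * {x | x ∈ AddSubgroup.closure (Set.range g ∪ Set.range h) ∧ ¬ Even (wtP x)}.ncard
        = 2 ^ r * (4 ^ c + 2 ^ c) := by
  classical
  set φ := pairLinearCombination (ZMod 2) g h
  have hV := closure_range_union_eq_range_pairLinearCombination (m := 2) g h
  have hφ : Function.Injective φ := injective_pairLinearCombination_of_card_closure g h <| by
    rw [hcard]
    simp [Nat.card_eq_fintype_card, ← pow_add, two_mul, add_right_comm]
  have hwt : ∀ p, (wtP (φ p) : ZMod 2) = typeIIIForm ⟨0, hc⟩ p := by
    intro p
    rw [cast_wtP_pairLinearCombination g h hgg hhh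
      (fun i j => by simp only [hgh, Fin.ext_iff, Fin.val_castAdd]) p,
      sum_mul_natCast_eq_of_odd_unique _ (fun i => wtP (g i)) _ hg1
        fun i hi => hgeven i (by simpa [Fin.ext_iff] using hi),
      sum_mul_natCast_eq_of_odd_unique _ (fun j => wtP (h j)) _ hh1
        fun j hj => hheven j (by simpa [Fin.ext_iff] using hj)]
    rfl
  simp only [hV, Submodule.mem_toAddSubgroup, LinearMap.mem_range, ← Set.mem_range]
  rw [Set.ncard_setOf_mem_range_and hφ, Set.ncard_setOf_mem_range_and hφ]
  simp_rw [← ZMod.natCast_eq_zero_iff_even, hwt]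
  exact two_mul_card_typeIIIForm _
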